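/- Let U₀ ∈ B(H₀) and U₁ ∈ B(H₁) be unitary operators, and set S₀ := U₀T₀U₀* and S₁ := U₁T₁U₁*. Assume that the only operator W ∈ B(H₁,H₀) with T₀W = WT₁ is W = 0. Then the block diagonal unitary U₀ ⊕ U₁ on H₀ ⊕ H₁ satisfies (U₀ ⊕ U₁) T (U₀ ⊕ U₁)* = [[S₀, XS₁ − S₀X],[0,S₁]] if and only if U₀∘X = X∘U₁. -/

import Mathlib

/-!
Conjugation by `U₀ ⊕ U₁` acts entrywise on block operators, so the diagonal entries match by
definition of `S₀, S₁`, and the identity reduces to its top-right entry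
`U₀ (X T₁ - T₀ X) U₁* = X S₁ - S₀ X`. Pulling it back by `Z ↦ U₀* Z U₁` and writing
`Y = U₀* X U₁`, it becomes `X T₁ - T₀ X = Y T₁ - T₀ Y`, i.e. `X - Y` intertwines `T₀` and `T₁`.
By hypothesis this forces `X = Y`, which for unitaries is `U₀ X = X U₁`.
-/

open ContinuousLinearMap

noncomputable def blockOp {H₀ H₁ K₀ K₁ : Type*}
    [NormedAddCommGroup H₀] [InnerProductSpace ℂ H₀]
    [NormedAddCommGroup H₁] [InnerProductSpace ℂ H₁]
    [NormedAddCommGroup K₀] [InnerProductSpace ℂ K₀]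
    [NormedAddCommGroup K₁] [InnerProductSpace ℂ K₁]
    (A : H₀ →L[ℂ] K₀) (B : H₁ →L[ℂ] K₀) (C : H₀ →L[ℂ] K₁) (D : H₁ →L[ℂ] K₁) :
    WithLp 2 (H₀ × H₁) →L[ℂ] WithLp 2 (K₀ × K₁) :=
  (((WithLp.prodContinuousLinearEquiv 2 ℂ K₀ K₁).symm : (K₀ × K₁) →L[ℂ] WithLp 2 (K₀ × K₁)) ∘L
    ((A.coprod B).prod (C.coprod D))) ∘L
    ((WithLp.prodContinuousLinearEquiv 2 ℂ H₀ H₁ : WithLp 2 (H₀ × H₁) →L[ℂ] (H₀ × H₁)))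

section BlockOp

variable {H₀ H₁ K₀ K₁ L₀ L₁ : Type*}
    [NormedAddCommGroup H₀] [InnerProductSpace ℂ H₀]
    [NormedAddCommGroup H₁] [InnerProductSpace ℂ H₁]
    [NormedAddCommGroup K₀] [InnerProductSpace ℂ K₀]
    [NormedAddCommGroup K₁] [InnerProductSpace ℂ K₁]
    [NormedAddCommGroup L₀] [InnerProductSpace ℂ L₀]
    [NormedAddCommGroup L₁] [InnerProductSpace ℂ L₁]

@[simp]
lemma blockOp_apply_fst (A : H₀ →L[ℂ] K₀) (B : H₁ →L[ℂ] K₀) (C : H₀ →L[ℂ] K₁) (D : H₁ →L[ℂ] K₁)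
    (x : WithLp 2 (H₀ × H₁)) : (blockOp A B C D x).fst = A x.fst + B x.snd := rfl

@[simp]
lemma blockOp_apply_snd (A : H₀ →L[ℂ] K₀) (B : H₁ →L[ℂ] K₀) (C : H₀ →L[ℂ] K₁) (D : H₁ →L[ℂ] K₁)
    (x : WithLp 2 (H₀ × H₁)) : (blockOp A B C D x).snd = C x.fst + D x.snd := rfl

lemma blockOp_comp (A : K₀ →L[ℂ] L₀) (B : K₁ →L[ℂ] L₀) (C : K₀ →L[ℂ] L₁) (D : K₁ →L[ℂ] L₁)
    (A' : H₀ →L[ℂ] K₀) (B' : H₁ →L[ℂ] K₀) (C' : H₀ →L[ℂ] K₁) (D' : H₁ →L[ℂ] K₁) :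
    blockOp A B C D ∘L blockOp A' B' C' D'
      = blockOp (A ∘L A' + B ∘L C') (A ∘L B' + B ∘L D')
          (C ∘L A' + D ∘L C') (C ∘L B' + D ∘L D') := by
  ext x
  refine WithLp.ofLp_injective 2 (Prod.ext ?_ ?_) <;>
  · simp only [comp_apply, WithLp.ofLp_fst, WithLp.ofLp_snd, blockOp_apply_fst, blockOp_apply_snd,
      add_apply, map_add]
    abel

lemma blockOp_inj {A A' : H₀ →L[ℂ] K₀} {B B' : H₁ →L[ℂ] K₀} {C C' : H₀ →L[ℂ] K₁}
    {D D' : H₁ →L[ℂ] K₁} :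
    blockOp A B C D = blockOp A' B' C' D' ↔ A = A' ∧ B = B' ∧ C = C' ∧ D = D' := by
  refine ⟨fun h => ?_, by rintro ⟨rfl, rfl, rfl, rfl⟩; rfl⟩
  have on_fst (v : H₀) := congrArg (fun f => f (WithLp.toLp 2 (v, (0 : H₁)))) h
  have on_snd (v : H₁) := congrArg (fun f => f (WithLp.toLp 2 ((0 : H₀), v))) h
  refine ⟨?_, ?_, ?_, ?_⟩ <;> ext v
  · simpa using congrArg Prod.fst (congrArg WithLp.ofLp (on_fst v))
  · simpa using congrArg Prod.fst (congrArg WithLp.ofLp (on_snd v))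
  · simpa using congrArg Prod.snd (congrArg WithLp.ofLp (on_fst v))
  · simpa using congrArg Prod.snd (congrArg WithLp.ofLp (on_snd v))

variable [CompleteSpace H₀] [CompleteSpace H₁] [CompleteSpace K₀] [CompleteSpace K₁]

lemma adjoint_blockOp (A : H₀ →L[ℂ] K₀) (B : H₁ →L[ℂ] K₀) (C : H₀ →L[ℂ] K₁) (D : H₁ →L[ℂ] K₁) :
    adjoint (blockOp A B C D) = blockOp (adjoint A) (adjoint C) (adjoint B) (adjoint D) := by
  refine ((eq_adjoint_iff _ _).2 fun x y => ?_).symm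
  simp only [WithLp.prod_inner_apply, WithLp.ofLp_fst, WithLp.ofLp_snd, blockOp_apply_fst,
    blockOp_apply_snd, inner_add_left, inner_add_right, adjoint_inner_left]
  ring

lemma blockOp_diag_conj (U₀ : H₀ →L[ℂ] K₀) (U₁ : H₁ →L[ℂ] K₁)
    (A : H₀ →L[ℂ] H₀) (B : H₁ →L[ℂ] H₀) (C : H₀ →L[ℂ] H₁) (D : H₁ →L[ℂ] H₁) :
    blockOp U₀ 0 0 U₁ ∘L blockOp A B C D ∘L adjoint (blockOp U₀ 0 0 U₁)
      = blockOp (U₀ ∘L A ∘L adjoint U₀) (U₀ ∘L B ∘L adjoint U₁)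
          (U₁ ∘L C ∘L adjoint U₀) (U₁ ∘L D ∘L adjoint U₁) := by
  simp [adjoint_blockOp, blockOp_comp]

end BlockOp

section Intertwining

variable {H₀ H₁ : Type*}
    [NormedAddCommGroup H₀] [InnerProductSpace ℂ H₀] [CompleteSpace H₀]
    [NormedAddCommGroup H₁] [InnerProductSpace ℂ H₁]
    {U₀ : H₀ →L[ℂ] H₀} {U₁ : H₁ →L[ℂ] H₁}

lemma eq_adjoint_conj_iff_comp_eq_comp (hU₀ : adjoint U₀ ∘L U₀ = 1 ∧ U₀ ∘L adjoint U₀ = 1)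
    (X : H₁ →L[ℂ] H₀) : X = adjoint U₀ ∘L X ∘L U₁ ↔ U₀ ∘L X = X ∘L U₁ := by
  constructor <;> intro h
  · conv_lhs => rw [h]
    rw [← comp_assoc, hU₀.2, one_def, id_comp]
  · rw [← h, ← comp_assoc, hU₀.1, one_def, id_comp]

variable [CompleteSpace H₁]

lemma conj_eq_iff_eq_adjoint_conj (hU₀ : adjoint U₀ ∘L U₀ = 1 ∧ U₀ ∘L adjoint U₀ = 1)
    (hU₁ : adjoint U₁ ∘L U₁ = 1 ∧ U₁ ∘L adjoint U₁ = 1) (Z W : H₁ →L[ℂ] H₀) :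
    U₀ ∘L Z ∘L adjoint U₁ = W ↔ Z = adjoint U₀ ∘L W ∘L U₁ := by
  constructor <;> rintro rfl <;> ext v
  · simp [← comp_apply (adjoint U₀) U₀, ← comp_apply (adjoint U₁) U₁, hU₀.1, hU₁.1]
  · simp [← comp_apply U₀ (adjoint U₀), ← comp_apply U₁ (adjoint U₁), hU₀.2, hU₁.2]

lemma adjoint_conj_commutator_conj (hU₀ : adjoint U₀ ∘L U₀ = 1) (hU₁ : adjoint U₁ ∘L U₁ = 1)
    (T₀ : H₀ →L[ℂ] H₀) (T₁ : H₁ →L[ℂ] H₁) (X : H₁ →L[ℂ] H₀) :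
    adjoint U₀ ∘L (X ∘L (U₁ ∘L T₁ ∘L adjoint U₁) - (U₀ ∘L T₀ ∘L adjoint U₀) ∘L X) ∘L U₁
      = (adjoint U₀ ∘L X ∘L U₁) ∘L T₁ - T₀ ∘L (adjoint U₀ ∘L X ∘L U₁) := by
  ext v
  simp [← comp_apply (adjoint U₀) U₀, ← comp_apply (adjoint U₁) U₁, hU₀, hU₁]

end Intertwining

lemma comp_sub_comp_eq_iff_intertwines {R M₀ M₁ : Type*} [Ring R]
    [TopologicalSpace M₀] [AddCommGroup M₀] [Module R M₀] [IsTopologicalAddGroup M₀]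
    [TopologicalSpace M₁] [AddCommGroup M₁] [Module R M₁] [IsTopologicalAddGroup M₁]
    (T₀ : M₀ →L[R] M₀) (T₁ : M₁ →L[R] M₁) (X Y : M₁ →L[R] M₀) :
    X ∘L T₁ - T₀ ∘L X = Y ∘L T₁ - T₀ ∘L Y ↔ T₀ ∘L (X - Y) = (X - Y) ∘L T₁ := by
  rw [comp_sub, sub_comp, ← sub_eq_zero, ← sub_eq_zero (a := T₀ ∘L X - T₀ ∘L Y)]
  constructor <;> intro h <;> rw [← neg_eq_zero, ← h] <;> abel

/-- with `S₀ = U₀T₀U₀*`, `S₁ = U₁T₁U₁*`, and assuming no nonzero `W`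
intertwines `T₀` and `T₁`, the diagonal unitary `U₀ ⊕ U₁` conjugates
`[[T₀, XT₁-T₀X],[0,T₁]]` to `[[S₀, XS₁-S₀X],[0,S₁]]` iff `U₀X = XU₁`. -/
theorem stmt12 {H₀ H₁ : Type*}
    [NormedAddCommGroup H₀] [InnerProductSpace ℂ H₀] [CompleteSpace H₀]
    [NormedAddCommGroup H₁] [InnerProductSpace ℂ H₁] [CompleteSpace H₁]
    (T₀ : H₀ →L[ℂ] H₀) (T₁ : H₁ →L[ℂ] H₁) (X : H₁ →L[ℂ] H₀)
    (U₀ : H₀ →L[ℂ] H₀) (U₁ : H₁ →L[ℂ] H₁)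
    (hU₀ : adjoint U₀ ∘L U₀ = 1 ∧ U₀ ∘L adjoint U₀ = 1)
    (hU₁ : adjoint U₁ ∘L U₁ = 1 ∧ U₁ ∘L adjoint U₁ = 1)
    (S₀ : H₀ →L[ℂ] H₀) (hS₀ : S₀ = U₀ ∘L T₀ ∘L adjoint U₀)
    (S₁ : H₁ →L[ℂ] H₁) (hS₁ : S₁ = U₁ ∘L T₁ ∘L adjoint U₁)
    (hW : ∀ W : H₁ →L[ℂ] H₀, T₀ ∘L W = W ∘L T₁ → W = 0) :
    (blockOp U₀ 0 0 U₁ ∘L blockOp T₀ (X ∘L T₁ - T₀ ∘L X) 0 T₁ ∘L adjoint (blockOp U₀ 0 0 U₁)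
        = blockOp S₀ (X ∘L S₁ - S₀ ∘L X) 0 S₁)
      ↔ U₀ ∘L X = X ∘L U₁ := by
  subst hS₀ hS₁
  rw [blockOp_diag_conj, blockOp_inj, conj_eq_iff_eq_adjoint_conj hU₀ hU₁,
    adjoint_conj_commutator_conj hU₀.1 hU₁.1, comp_sub_comp_eq_iff_intertwines,
    ← eq_adjoint_conj_iff_comp_eq_comp hU₀]
  simp only [zero_comp, comp_zero, true_and, and_true]
  constructor
  · exact fun h => sub_eq_zero.1 (hW _ h)
  · intro h
    rw [← h, sub_self, comp_zero, zero_comp]
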